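/- arXiv:1706.08689 — 2 statements merged into one kernel-verified Lean document; each statement's English description precedes it below -/
import Mathlib

section
/- In the disjoint fibring of the Hilbert calculi for classical conjunction and classical disjunction (rules as in the standard axiomatizations: ∧-elimination left/right, ∧-introduction, ∨-introduction, ∨-idempotence, ∨-commutativity, ∨-associativity), the dual absorption law fails: p∨(p∧q) ⊬ p. -/
/-!
A three-valued matrix refutes the inference. Order the values `0 < 1 < 2`, designate `2`,
interpret `∧` as `min` and `∨` as `a ∨ a = a`, `a ∨ b = 2` for `a ≠ b`. Every rule preserves
designation, yet under `p ↦ 1`, `q ↦ 0` the premise `1 ∨ min 1 0 = 1 ∨ 0` is designated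
while `p` is not.
-/

/-- Formulas over variables with binary connectives ∧ and ∨. -/
inductive Fm where
  | var : ℕ → Fm
  | and : Fm → Fm → Fm
  | or : Fm → Fm → Fm

/-- Derivability in the disjoint fibring of the Hilbert calculus for classical
conjunction with the Hilbert calculus for classical disjunction: the smallest
consequence relation containing the premises and closed under all substitution
instances of the rules (closure under cut and monotonicity is built in). -/
inductive Deriv : Set Fm → Fm → Prop
  | prem {Γ A} : A ∈ Γ → Deriv Γ A
  -- conjunction rules
  | andE1 {Γ A B} : Deriv Γ (Fm.and A B) → Deriv Γ A
  | andE2 {Γ A B} : Deriv Γ (Fm.and A B) → Deriv Γ B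
  | andI {Γ A B} : Deriv Γ A → Deriv Γ B → Deriv Γ (Fm.and A B)
  -- disjunction rules
  | orI {Γ A} (B) : Deriv Γ A → Deriv Γ (Fm.or A B)
  | orIdem {Γ A} : Deriv Γ (Fm.or A A) → Deriv Γ A
  | orComm {Γ A B} : Deriv Γ (Fm.or A B) → Deriv Γ (Fm.or B A)
  | orAssoc {Γ A B C} : Deriv Γ (Fm.or A (Fm.or B C)) → Deriv Γ (Fm.or (Fm.or A B) C)

def Fm.eval {α : Type*} (conj disj : α → α → α) (v : ℕ → α) : Fm → α
  | var n => v n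
  | and A B => conj (eval conj disj v A) (eval conj disj v B)
  | or A B => disj (eval conj disj v A) (eval conj disj v B)

theorem Deriv.eval_mem {α : Type*} {conj disj : α → α → α} {D : Set α} {v : ℕ → α}
    (conj_mem_iff : ∀ a b, conj a b ∈ D ↔ a ∈ D ∧ b ∈ D)
    (disj_mem_of_left : ∀ a b, a ∈ D → disj a b ∈ D)
    (mem_of_disj_self : ∀ a, disj a a ∈ D → a ∈ D)
    (disj_comm_mem : ∀ a b, disj a b ∈ D → disj b a ∈ D)
    (disj_assoc_mem : ∀ a b c, disj a (disj b c) ∈ D → disj (disj a b) c ∈ D)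
    {Γ : Set Fm} {A : Fm} (h : Deriv Γ A) (hΓ : ∀ B ∈ Γ, B.eval conj disj v ∈ D) :
    A.eval conj disj v ∈ D := by
  induction h with
  | prem hA => exact hΓ _ hA
  | andE1 _ ih => exact ((conj_mem_iff _ _).1 ih).1
  | andE2 _ ih => exact ((conj_mem_iff _ _).1 ih).2
  | andI _ _ ih₁ ih₂ => exact (conj_mem_iff _ _).2 ⟨ih₁, ih₂⟩
  | orI _ _ ih => exact disj_mem_of_left _ _ ih
  | orIdem _ ih => exact mem_of_disj_self _ ih
  | orComm _ ih => exact disj_comm_mem _ _ ih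
  | orAssoc _ ih => exact disj_assoc_mem _ _ _ ih

def threeValuedDisj (a b : Fin 3) : Fin 3 := if a = b then a else 2

theorem Deriv.eval_threeValued_eq_two {v : ℕ → Fin 3} {Γ : Set Fm} {A : Fm} (h : Deriv Γ A)
    (hΓ : ∀ B ∈ Γ, B.eval min threeValuedDisj v = 2) : A.eval min threeValuedDisj v = 2 :=
  h.eval_mem (D := {2}) (by decide) (by decide) (by decide) (by decide) (by decide) hΓ

/-- the dual absorption law fails in the fibring: p ∨ (p ∧ q) ⊬ p. -/
theorem stmt2 (p q : ℕ) (hpq : p ≠ q) :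
    ¬ Deriv {Fm.or (Fm.var p) (Fm.and (Fm.var p) (Fm.var q))} (Fm.var p) := by
  intro h
  let v : ℕ → Fin 3 := fun n => if n = p then 1 else 0
  have hpremise : ∀ B ∈ ({Fm.or (Fm.var p) (Fm.and (Fm.var p) (Fm.var q))} : Set Fm),
      B.eval min threeValuedDisj v = 2 := by
    rintro B rfl
    simp [Fm.eval, v, hpq.symm, threeValuedDisj]
  have hp : v p = 2 := h.eval_threeValued_eq_two hpremise
  simp [v] at hp
end

section
/- Let φ : Bool^k → Bool be a very significant Boolean function: φ is neither constantly true nor constantly false, and φ is not a projection-conjunction. Let I = {i : for all x, φ(x) = true implies x_i = true} be the set of projective components. Then there exist valuations giving a countermodel to the substitution instance: there is an assignment v : variables → Bool such that v satisfies φ(p₁,…,p_k) but falsifies φ(q₁,…,q_k), where q_i = p_i for i ∈ I and q_i = p_{k+i} (fresh variables) for i ∉ I. -/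
/-!
Pick a satisfying valuation `v`; it is `true` on every projective component. If some `w`
falsifies `φ` once the components in `I` are set to `true`, then `v` on `I` and `w` elsewhere
is the countermodel. Otherwise every valuation that is `true` on `I` satisfies `φ`, and together
with projectivity this makes `φ` the conjunction of the components in `I`.
-/

open Classical in
theorem ite_mem_eq_ite_mem_true {ι : Type*} {I : Set ι} {x : ι → Bool}
    (hx : ∀ i ∈ I, x i = true) (w : ι → Bool) :
    (fun i => if i ∈ I then x i else w i) = fun i => if i ∈ I then true else w i := by
  funext i
  split_ifs with hi
  · exact hx i hi
  · rfl

open Classical in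
theorem iff_forall_mem_of_projective {ι : Type*} (φ : (ι → Bool) → Bool) (I : Set ι)
    (hproj : ∀ x, φ x = true → ∀ i ∈ I, x i = true)
    (hfill : ∀ w : ι → Bool, φ (fun i => if i ∈ I then true else w i) = true) (x : ι → Bool) :
    φ x = true ↔ ∀ i ∈ I, x i = true := by
  refine ⟨hproj x, fun hx => ?_⟩
  have hx_fill := hfill x
  rwa [← ite_mem_eq_ite_mem_true hx, funext fun i => ite_self (x i)] at hx_fill

open Classical in
theorem stmt9_general (k : ℕ) (φ : (Fin k → Bool) → Bool)
    (hBot : ¬ ∀ x, φ x = false)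
    (hPC : ¬ ∃ J : Finset (Fin k), ∀ x, φ x = true ↔ ∀ i ∈ J, x i = true)
    (I : Set (Fin k)) (hI : ∀ i, i ∈ I ↔ ∀ x, φ x = true → x i = true) :
    ∃ v w : Fin k → Bool,
      φ v = true ∧ φ (fun i => if i ∈ I then v i else w i) = false := by
  obtain ⟨v, hv⟩ : ∃ v, φ v = true := by simpa using hBot
  have hproj : ∀ x, φ x = true → ∀ i ∈ I, x i = true := fun x hx i hi => (hI i).1 hi x hx
  obtain ⟨w, hw⟩ : ∃ w : Fin k → Bool, φ (fun i => if i ∈ I then true else w i) = false := by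
    by_contra! hfill
    refine hPC ⟨I.toFinset, fun x => ?_⟩
    simpa using iff_forall_mem_of_projective φ I hproj (by simpa using hfill) x
  exact ⟨v, w, hv, by rwa [ite_mem_eq_ite_mem_true (hproj v hv)]⟩

open Classical in
/-- if φ : Bool^k → Bool is very significant (neither constantly
true nor constantly false, and not a projection-conjunction), and I is its set
of projective components, then there are valuations v, w such that v satisfies
φ(p₁,…,p_k) while the instance with the variables outside I replaced by fresh
variables (valued by w) is falsified. -/
theorem stmt9 (k : ℕ) (φ : (Fin k → Bool) → Bool)
    (hTop : ¬ ∀ x, φ x = true) (hBot : ¬ ∀ x, φ x = false)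
    (hPC : ¬ ∃ J : Finset (Fin k), ∀ x, φ x = true ↔ ∀ i ∈ J, x i = true)
    (I : Set (Fin k)) (hI : ∀ i, i ∈ I ↔ ∀ x, φ x = true → x i = true) :
    ∃ v w : Fin k → Bool,
      φ v = true ∧ φ (fun i => if i ∈ I then v i else w i) = false :=
  stmt9_general k φ hBot hPC I hI
end
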